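/- arXiv:2601.19422 — 6 statements merged into one kernel-verified Lean document; each statement's English description precedes it below -/
import Mathlib

section
/- There exist a finite directed graph G = (V,E) with nonnegative arc weights, a partition P of V, and two scalar nodal attributes a, b : V → ℝ such that the aggregated intra-group assortativity coefficients coincide, r_in(a) = r_in(b) (both being defined, i.e. with positive endpoint variances), while the interior–boundary assortativity profiles differ: ρ_T(a;P) ≠ ρ_T(b;P) for at least one arc type T ∈ {I→I, I→B, B→I} (with both sides defined). -/
/-!
The aggregated coefficient `r_in` only sees the pooled collection of endpoint pairs
`(x u, x v)` over the intra-group arcs, and the strata split that collection. In the example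
below, vertex `6` alone forms the second block, so `4` and `5` are boundary nodes of the first.
The interior arcs `(0,1), (2,3)` carry the pairs `(0,0), (1,1)` under `attrA` and `(0,1), (1,0)`
under `attrB`, while the interior-to-boundary arcs `(0,4), (2,5)` carry them the other way round.
Swapping `(0,1) ↔ (0,4)` and `(2,3) ↔ (2,5)` therefore matches `attrA` with `attrB` on all
of `E_in`, so their values of `r_in` agree, whereas on `E_{I→I}` the head value is an affine
function of the tail value with slope `1` for `attrA` and `-1` for `attrB`, giving `ρ = 1`
and `ρ = -1`.
-/

open Finset
open scoped Classical

/-- A node `v` is interior (relative to the block assignment `P` and arc set `Ed`)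
if all of its in- and out-neighbours lie in its own block. -/
def IsInterior {V K : Type*} (Ed : Finset (V × V)) (P : V → K) (v : V) : Prop :=
  ∀ u, ((u, v) ∈ Ed ∨ (v, u) ∈ Ed) → P u = P v

/-- Arcs whose tail and head are interior nodes of the same block. -/
noncomputable def EII {V K : Type*} (Ed : Finset (V × V)) (P : V → K) : Finset (V × V) :=
  Ed.filter (fun e => P e.1 = P e.2 ∧ IsInterior Ed P e.1 ∧ IsInterior Ed P e.2)

/-- Arcs with interior tail and boundary head in the same block. -/
noncomputable def EIB {V K : Type*} (Ed : Finset (V × V)) (P : V → K) : Finset (V × V) :=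
  Ed.filter (fun e => P e.1 = P e.2 ∧ IsInterior Ed P e.1 ∧ ¬ IsInterior Ed P e.2)

/-- Arcs with boundary tail and interior head in the same block. -/
noncomputable def EBI {V K : Type*} (Ed : Finset (V × V)) (P : V → K) : Finset (V × V) :=
  Ed.filter (fun e => P e.1 = P e.2 ∧ ¬ IsInterior Ed P e.1 ∧ IsInterior Ed P e.2)

/-- All intra-group arcs (union of the three intra-group strata). -/
noncomputable def Ein {V K : Type*} (Ed : Finset (V × V)) (P : V → K) : Finset (V × V) :=
  EII Ed P ∪ EIB Ed P ∪ EBI Ed P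

/-- Mean of `f` over a finite set of arcs. -/
noncomputable def pairMean {V : Type*} (s : Finset (V × V)) (f : V × V → ℝ) : ℝ :=
  (∑ e ∈ s, f e) / s.card

/-- Empirical covariance of `f` and `g` over a finite set of arcs. -/
noncomputable def pairCov {V : Type*} (s : Finset (V × V)) (f g : V × V → ℝ) : ℝ :=
  (∑ e ∈ s, (f e - pairMean s f) * (g e - pairMean s g)) / s.card

/-- Pearson correlation of `f` and `g` over a finite set of arcs. -/
noncomputable def pairCorr {V : Type*} (s : Finset (V × V)) (f g : V × V → ℝ) : ℝ :=
  pairCov s f g / (Real.sqrt (pairCov s f f) * Real.sqrt (pairCov s g g))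

/-- Attribute value at the tail of an arc. -/
def tl {V : Type*} (x : V → ℝ) : V × V → ℝ := fun e => x e.1

/-- Attribute value at the head of an arc. -/
def hd {V : Type*} (x : V → ℝ) : V × V → ℝ := fun e => x e.2

/-- The Pearson correlation of `(x(u), x(v))` over arcs `(u,v) ∈ s` is defined
(has positive endpoint variances). -/
def DefinedOn {V : Type*} (s : Finset (V × V)) (x : V → ℝ) : Prop :=
  0 < pairCov s (tl x) (tl x) ∧ 0 < pairCov s (hd x) (hd x)

/-- Type-restricted assortativity: Pearson correlation of endpoint attribute values. -/
noncomputable def rOn {V : Type*} (s : Finset (V × V)) (x : V → ℝ) : ℝ :=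
  pairCorr s (tl x) (hd x)

lemma EII_subset_Ein {V K : Type*} (Ed : Finset (V × V)) (P : V → K) : EII Ed P ⊆ Ein Ed P :=
  subset_union_left.trans subset_union_left

section Pearson

variable {V : Type*} {s : Finset (V × V)} {f f' g g' h : V × V → ℝ}

lemma pairMean_congr_perm (σ : Equiv.Perm (V × V)) (hσ : {e | σ e ≠ e} ⊆ s)
    (hf : ∀ e ∈ s, f' e = f (σ e)) : pairMean s f' = pairMean s f := by
  rw [pairMean, pairMean, sum_congr rfl hf, σ.sum_comp s f hσ]

lemma pairCov_congr_perm (σ : Equiv.Perm (V × V)) (hσ : {e | σ e ≠ e} ⊆ s)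
    (hf : ∀ e ∈ s, f' e = f (σ e)) (hg : ∀ e ∈ s, g' e = g (σ e)) :
    pairCov s f' g' = pairCov s f g := by
  rw [pairCov, pairCov, pairMean_congr_perm σ hσ hf, pairMean_congr_perm σ hσ hg,
    ← σ.sum_comp s (fun e => (f e - pairMean s f) * (g e - pairMean s g)) hσ]
  exact congrArg (· / _) (sum_congr rfl fun e he => by rw [hf e he, hg e he])

lemma pairCorr_congr_perm (σ : Equiv.Perm (V × V)) (hσ : {e | σ e ≠ e} ⊆ s)
    (hf : ∀ e ∈ s, f' e = f (σ e)) (hg : ∀ e ∈ s, g' e = g (σ e)) :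
    pairCorr s f' g' = pairCorr s f g := by
  rw [pairCorr, pairCorr, pairCov_congr_perm σ hσ hf hg, pairCov_congr_perm σ hσ hf hf,
    pairCov_congr_perm σ hσ hg hg]

lemma pairCov_comm : pairCov s f g = pairCov s g f := by
  simp only [pairCov, mul_comm]

lemma nonempty_of_pairCov_self_pos (hf : 0 < pairCov s f f) : s.Nonempty := by
  rw [nonempty_iff_ne_empty]
  rintro rfl
  simp [pairCov] at hf

lemma pairMean_of_affine (hs : s.Nonempty) {α β : ℝ} (hg : ∀ e ∈ s, g e = α * f e + β) :
    pairMean s g = α * pairMean s f + β := by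
  have hcard : (s.card : ℝ) ≠ 0 := by exact_mod_cast hs.card_pos.ne'
  rw [pairMean, pairMean, sum_congr rfl hg, sum_add_distrib, ← mul_sum, sum_const, nsmul_eq_mul]
  field_simp

lemma pairCov_of_affine_right (hs : s.Nonempty) {α β : ℝ} (hg : ∀ e ∈ s, g e = α * f e + β) :
    pairCov s h g = α * pairCov s h f := by
  rw [pairCov, pairCov, pairMean_of_affine hs hg, mul_div_assoc', mul_sum]
  congr 1
  exact sum_congr rfl fun e he => by rw [hg e he]; ring

lemma pairCorr_of_affine (hf : 0 < pairCov s f f) {α β : ℝ} (hg : ∀ e ∈ s, g e = α * f e + β) :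
    pairCorr s f g = α / |α| := by
  have hs := nonempty_of_pairCov_self_pos hf
  have hfg : pairCov s f g = α * pairCov s f f := pairCov_of_affine_right hs hg
  have hgg : pairCov s g g = α ^ 2 * pairCov s f f := by
    rw [pairCov_of_affine_right hs hg, pairCov_comm, hfg]
    ring
  rw [pairCorr, hfg, hgg, Real.sqrt_mul (sq_nonneg α), Real.sqrt_sq_eq_abs]
  set r := √(pairCov s f f)
  have hr : r ≠ 0 := (Real.sqrt_pos.2 hf).ne'
  rw [← Real.mul_self_sqrt hf.le, show r * (|α| * r) = |α| * (r * r) by ring]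
  exact mul_div_mul_right _ _ (mul_self_ne_zero.2 hr)

lemma pairCov_self_pos_of_ne {e₁ e₂ : V × V} (he₁ : e₁ ∈ s) (he₂ : e₂ ∈ s) (hne : f e₁ ≠ f e₂) :
    0 < pairCov s f f := by
  obtain ⟨e, he, hem⟩ : ∃ e ∈ s, f e ≠ pairMean s f := by
    by_contra! h
    exact hne ((h e₁ he₁).trans (h e₂ he₂).symm)
  refine div_pos (sum_pos' (fun e _ => mul_self_nonneg _) ⟨e, he, ?_⟩) ?_
  · exact mul_self_pos.2 (sub_ne_zero.2 hem)
  · exact_mod_cast card_pos.2 ⟨e₁, he₁⟩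

lemma definedOn_of_ne {e₁ e₂ : V × V} (x : V → ℝ) (he₁ : e₁ ∈ s) (he₂ : e₂ ∈ s)
    (htl : x e₁.1 ≠ x e₂.1) (hhd : x e₁.2 ≠ x e₂.2) : DefinedOn s x :=
  ⟨pairCov_self_pos_of_ne he₁ he₂ htl, pairCov_self_pos_of_ne he₁ he₂ hhd⟩

lemma rOn_congr_perm (σ : Equiv.Perm (V × V)) (hσ : {e | σ e ≠ e} ⊆ s) {x y : V → ℝ}
    (hxy : ∀ e ∈ s, x e.1 = y (σ e).1 ∧ x e.2 = y (σ e).2) : rOn s x = rOn s y :=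
  pairCorr_congr_perm σ hσ (fun e he => (hxy e he).1) (fun e he => (hxy e he).2)

end Pearson

namespace LossOfResolution

def arcs : Finset (Fin 7 × Fin 7) := {(0, 1), (2, 3), (0, 4), (2, 5), (4, 6), (5, 6)}

def block (v : Fin 7) : Fin 2 := if v = 6 then 1 else 0

def attrA : Fin 7 → ℝ := ![0, 0, 1, 1, 1, 0, 0]

def attrB : Fin 7 → ℝ := ![0, 1, 1, 0, 0, 1, 0]

def arcSwap : Equiv.Perm (Fin 7 × Fin 7) := Equiv.swap (0, 1) (0, 4) * Equiv.swap (2, 3) (2, 5)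

-- The strata are filtered with classical decidability; `filter_congr_decidable` restores a
-- computable instance so that `decide` can evaluate them.
lemma EII_arcs : EII arcs block = {(0, 1), (2, 3)} := by
  unfold EII IsInterior
  rw [filter_congr_decidable]
  decide

lemma EIB_arcs : EIB arcs block = {(0, 4), (2, 5)} := by
  unfold EIB IsInterior
  rw [filter_congr_decidable]
  decide

lemma EBI_arcs : EBI arcs block = ∅ := by
  unfold EBI IsInterior
  rw [filter_congr_decidable]
  decide

lemma Ein_arcs : Ein arcs block = {(0, 1), (2, 3), (0, 4), (2, 5)} := by
  ext e
  simp only [Ein, EII_arcs, EIB_arcs, EBI_arcs, mem_union, mem_insert, mem_singleton,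
    notMem_empty]
  tauto

lemma definedOn_of_EII_subset {s : Finset (Fin 7 × Fin 7)} (hs : EII arcs block ⊆ s)
    {x : Fin 7 → ℝ} (h02 : x 0 ≠ x 2) (h13 : x 1 ≠ x 3) : DefinedOn s x :=
  definedOn_of_ne (e₁ := (0, 1)) (e₂ := (2, 3)) x (hs (by simp [EII_arcs]))
    (hs (by simp [EII_arcs])) h02 h13

lemma definedOn_attrA {s : Finset (Fin 7 × Fin 7)} (hs : EII arcs block ⊆ s) :
    DefinedOn s attrA :=
  definedOn_of_EII_subset hs (by simp [attrA, Matrix.cons_val]) (by simp [attrA, Matrix.cons_val])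

lemma definedOn_attrB {s : Finset (Fin 7 × Fin 7)} (hs : EII arcs block ⊆ s) :
    DefinedOn s attrB :=
  definedOn_of_EII_subset hs (by simp [attrB, Matrix.cons_val]) (by simp [attrB, Matrix.cons_val])

lemma rOn_Ein_attrA_eq_attrB : rOn (Ein arcs block) attrA = rOn (Ein arcs block) attrB := by
  refine rOn_congr_perm arcSwap (fun e => ?_) fun e he => ?_
  · rw [Ein_arcs]
    revert e
    decide
  · rw [Ein_arcs] at he
    fin_cases he <;> simp [attrA, attrB, arcSwap, Equiv.swap_apply_of_ne_of_ne]

lemma rOn_EII_attrA : rOn (EII arcs block) attrA = 1 := by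
  have h : ∀ e ∈ EII arcs block, hd attrA e = 1 * tl attrA e + 0 := by
    simp [EII_arcs, tl, hd, attrA]
  rw [rOn, pairCorr_of_affine (definedOn_attrA subset_rfl).1 h]
  norm_num

lemma rOn_EII_attrB : rOn (EII arcs block) attrB = -1 := by
  have h : ∀ e ∈ EII arcs block, hd attrB e = -1 * tl attrB e + 1 := by
    simp [EII_arcs, tl, hd, attrB]
  rw [rOn, pairCorr_of_affine (definedOn_attrB subset_rfl).1 h]
  norm_num

end LossOfResolution

/-- Loss of resolution under scalar aggregation: two attributes can have equal
aggregated intra-group assortativity coefficients while their interior--boundary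
assortativity profiles differ on some intra-group arc type. -/
theorem loss_of_resolution :
    ∃ (n K : ℕ) (Ed : Finset (Fin n × Fin n)) (P : Fin n → Fin K)
      (w : Fin n × Fin n → ℝ) (a b : Fin n → ℝ),
      (∀ e, 0 ≤ w e) ∧
      DefinedOn (Ein Ed P) a ∧ DefinedOn (Ein Ed P) b ∧
      rOn (Ein Ed P) a = rOn (Ein Ed P) b ∧
      ((DefinedOn (EII Ed P) a ∧ DefinedOn (EII Ed P) b ∧
          rOn (EII Ed P) a ≠ rOn (EII Ed P) b) ∨
       (DefinedOn (EIB Ed P) a ∧ DefinedOn (EIB Ed P) b ∧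
          rOn (EIB Ed P) a ≠ rOn (EIB Ed P) b) ∨
       (DefinedOn (EBI Ed P) a ∧ DefinedOn (EBI Ed P) b ∧
          rOn (EBI Ed P) a ≠ rOn (EBI Ed P) b)) := by
  open LossOfResolution in
  exact ⟨7, 2, arcs, block, 0, attrA, attrB, fun _ => le_rfl,
    definedOn_attrA (EII_subset_Ein _ _), definedOn_attrB (EII_subset_Ein _ _),
    rOn_Ein_attrA_eq_attrB,
    Or.inl ⟨definedOn_attrA subset_rfl, definedOn_attrB subset_rfl,
      by rw [rOn_EII_attrA, rOn_EII_attrB]; norm_num⟩⟩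
end

section
/- Let G = (V,E) be a finite directed graph, P = {V_1,...,V_K} a partition of V, and a : V → ℝ a scalar attribute. For each k let μ_B^(k) and μ_I^(k) be the means of a over Bdy(V_k) and Int(V_k) respectively. For each k set E_k = E_{B→I} ∩ (V_k × V_k), m_k = |E_k|, M = |E_{B→I}|, π_k = m_k/M, and let X̄_k, Ȳ_k be the means of a(u) and a(v) over (u,v) ∈ E_k, and X̄, Ȳ the corresponding means over all of E_{B→I}. Assume: (i) for every k with nonempty interior and boundary, μ_B^(k) > μ_I^(k); (ii) for every k with E_k ≠ ∅, X̄_k ≥ μ_B^(k) and Ȳ_k ≤ μ_I^(k); (iii) the variances of the samples (a(u))_{(u,v)∈E_{B→I}} and (a(v))_{(u,v)∈E_{B→I}} are strictly positive; (iv) for every k with E_k ≠ ∅, the empirical covariance Cov_k = (1/m_k)Σ_{(u,v)∈E_k}(a(u)−X̄_k)(a(v)−Ȳ_k) is ≤ 0; (v) Σ_k π_k(X̄_k−X̄)(Ȳ_k−Ȳ) ≤ 0; and at least one of the inequalities in (iv) or (v) is strict. Then the Pearson correlation r_{B→I}(a) of the pairs (a(u),a(v)) over (u,v) ∈ E_{B→I}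 is strictly negative. -/
open Finset
open scoped Classical

/-- Interior nodes of the block `k`. -/
noncomputable def IntS {V K : Type*} [Fintype V] (Ed : Finset (V × V)) (P : V → K)
    (k : K) : Finset V :=
  Finset.univ.filter (fun v => P v = k ∧ IsInterior Ed P v)

/-- Boundary nodes of the block `k`. -/
noncomputable def BdyS {V K : Type*} [Fintype V] (Ed : Finset (V × V)) (P : V → K)
    (k : K) : Finset V :=
  Finset.univ.filter (fun v => P v = k ∧ ¬ IsInterior Ed P v)

/-- The boundary-to-interior arcs within the block `k`. -/
noncomputable def EBIk {V K : Type*} (Ed : Finset (V × V)) (P : V → K) (k : K) :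
    Finset (V × V) :=
  (EBI Ed P).filter (fun e => P e.1 = k)

/-- Mean of an attribute over a finite set of nodes. -/
noncomputable def nodeMean {V : Type*} (s : Finset V) (a : V → ℝ) : ℝ :=
  (∑ v ∈ s, a v) / s.card

/-
Splitting the `B→I` arcs by the block of their tail, the law of total covariance writes the
covariance of the endpoint attributes as the weighted sum of the within-block covariances plus
the between-block covariance of the block means. Both parts are `≤ 0` by (iv) and (v), one of
them strictly, so the covariance, and with it the correlation, is negative.
-/

section PairStatistics

variable {V : Type*}

lemma sum_eq_card_mul_pairMean (s : Finset (V × V)) (f : V × V → ℝ) :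
    ∑ e ∈ s, f e = s.card * pairMean s f := by
  rcases s.eq_empty_or_nonempty with rfl | hs
  · simp
  · have : (s.card : ℝ) ≠ 0 := by exact_mod_cast hs.card_pos.ne'
    rw [pairMean]
    field_simp

lemma sum_sub_pairMean_eq_zero (s : Finset (V × V)) (f : V × V → ℝ) :
    ∑ e ∈ s, (f e - pairMean s f) = 0 := by
  rw [sum_sub_distrib, sum_const, sum_eq_card_mul_pairMean, nsmul_eq_mul, sub_self]

lemma sum_centered_mul_eq_card_mul_pairCov (s : Finset (V × V)) (f g : V × V → ℝ) :
    ∑ e ∈ s, (f e - pairMean s f) * (g e - pairMean s g) = s.card * pairCov s f g := by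
  rcases s.eq_empty_or_nonempty with rfl | hs
  · simp
  · have : (s.card : ℝ) ≠ 0 := by exact_mod_cast hs.card_pos.ne'
    rw [pairCov]
    field_simp

/-- König–Huygens identity, centred at arbitrary constants. -/
lemma sum_sub_mul_sub_eq_card_mul_pairCov_add (s : Finset (V × V)) (f g : V × V → ℝ)
    (x y : ℝ) :
    ∑ e ∈ s, (f e - x) * (g e - y)
      = s.card * pairCov s f g + s.card * (pairMean s f - x) * (pairMean s g - y) := by
  set X := pairMean s f
  set Y := pairMean s g
  have expand : ∀ e ∈ s, (f e - x) * (g e - y)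
      = (f e - X) * (g e - Y) + (Y - y) * (f e - X) + (X - x) * (g e - Y)
        + (X - x) * (Y - y) := fun e _ => by ring
  rw [sum_congr rfl expand, sum_add_distrib, sum_add_distrib, sum_add_distrib, ← mul_sum,
    ← mul_sum, sum_sub_pairMean_eq_zero, sum_sub_pairMean_eq_zero,
    sum_centered_mul_eq_card_mul_pairCov, sum_const, nsmul_eq_mul]
  ring

/-- Law of total covariance; it holds also for empty `s`, where both sides are `0`
since `x / 0 = 0`. -/
theorem pairCov_eq_within_add_between {ι : Type*} [Fintype ι] (s : Finset (V × V))
    (p : V × V → ι) (f g : V × V → ℝ) :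
    pairCov s f g
      = ∑ k, ((s.filter (p · = k)).card / s.card : ℝ) * pairCov (s.filter (p · = k)) f g
        + ∑ k, ((s.filter (p · = k)).card / s.card : ℝ)
            * (pairMean (s.filter (p · = k)) f - pairMean s f)
            * (pairMean (s.filter (p · = k)) g - pairMean s g) := by
  have hfibres : (s.card : ℝ) * pairCov s f g
      = ∑ k, ∑ e ∈ s.filter (p · = k), (f e - pairMean s f) * (g e - pairMean s g) :=
    (sum_centered_mul_eq_card_mul_pairCov s f g).symm.trans (sum_fiberwise s p _).symm
  simp only [sum_sub_mul_sub_eq_card_mul_pairCov_add, sum_add_distrib] at hfibres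
  rcases s.eq_empty_or_nonempty with rfl | hs
  · simp [pairCov]
  · have : (s.card : ℝ) ≠ 0 := by exact_mod_cast hs.card_pos.ne'
    rw [← mul_right_inj' this, hfibres, mul_add, mul_sum, mul_sum]
    congr 1 <;> refine sum_congr rfl fun k _ => ?_ <;> field_simp

lemma pairCorr_neg_of_pairCov_neg {s : Finset (V × V)} {f g : V × V → ℝ}
    (hfg : pairCov s f g < 0) (hf : 0 < pairCov s f f) (hg : 0 < pairCov s g g) :
    pairCorr s f g < 0 :=
  div_neg_of_neg_of_pos hfg (mul_pos (Real.sqrt_pos.mpr hf) (Real.sqrt_pos.mpr hg))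

end PairStatistics

lemma EBIk_subset_EBI {V K : Type*} (Ed : Finset (V × V)) (P : V → K) (k : K) :
    EBIk Ed P k ⊆ EBI Ed P :=
  filter_subset _ _

theorem negative_BI_component_general
    {V : Type*} (K : ℕ)
    (Ed : Finset (V × V)) (P : V → Fin K) (a : V → ℝ)
    -- (iii) nondegeneracy: positive endpoint variances on the B→I sample
    (hiii₁ : 0 < pairCov (EBI Ed P) (fun e => a e.1) (fun e => a e.1))
    (hiii₂ : 0 < pairCov (EBI Ed P) (fun e => a e.2) (fun e => a e.2))
    -- (iv) within-group nonpositive covariance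
    (hiv : ∀ k, (EBIk Ed P k).Nonempty →
      pairCov (EBIk Ed P k) (fun e => a e.1) (fun e => a e.2) ≤ 0)
    -- (v) between-group mean term nonpositive
    (hv : ∑ k, (((EBIk Ed P k).card : ℝ) / (EBI Ed P).card)
        * (pairMean (EBIk Ed P k) (fun e => a e.1) - pairMean (EBI Ed P) (fun e => a e.1))
        * (pairMean (EBIk Ed P k) (fun e => a e.2) - pairMean (EBI Ed P) (fun e => a e.2))
        ≤ 0)
    -- at least one of (iv), (v) strict
    (hstrict :
      (∃ k, (EBIk Ed P k).Nonempty ∧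
        pairCov (EBIk Ed P k) (fun e => a e.1) (fun e => a e.2) < 0) ∨
      ∑ k, (((EBIk Ed P k).card : ℝ) / (EBI Ed P).card)
        * (pairMean (EBIk Ed P k) (fun e => a e.1) - pairMean (EBI Ed P) (fun e => a e.1))
        * (pairMean (EBIk Ed P k) (fun e => a e.2) - pairMean (EBI Ed P) (fun e => a e.2))
        < 0) :
    pairCorr (EBI Ed P) (fun e => a e.1) (fun e => a e.2) < 0 := by
  set w : Fin K → ℝ := fun k => ((EBIk Ed P k).card : ℝ) / (EBI Ed P).card
  set c : Fin K → ℝ := fun k => pairCov (EBIk Ed P k) (fun e => a e.1) (fun e => a e.2)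
  have hweighted : ∀ k, w k * c k ≤ 0 := fun k => by
    rcases (EBIk Ed P k).eq_empty_or_nonempty with hk | hk
    · simp [w, hk]
    · exact mul_nonpos_of_nonneg_of_nonpos (by positivity) (hiv k hk)
  have hwithin : ∑ k, w k * c k ≤ 0 := sum_nonpos fun k _ => hweighted k
  have hcov : pairCov (EBI Ed P) (fun e => a e.1) (fun e => a e.2) < 0 := by
    rw [pairCov_eq_within_add_between _ (fun e => P e.1)]
    rcases hstrict with ⟨k, hk, hck⟩ | hbetween
    · have hwk : 0 < w k := div_pos (by exact_mod_cast hk.card_pos)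
        (by exact_mod_cast (hk.mono (EBIk_subset_EBI Ed P k)).card_pos)
      have : ∑ k, w k * c k < 0 :=
        sum_neg' (fun k _ => hweighted k) ⟨k, mem_univ k, mul_neg_of_pos_of_neg hwk hck⟩
      exact add_neg_of_neg_of_nonpos this hv
    · exact add_neg_of_nonpos_of_neg hwithin hbetween
  exact pairCorr_neg_of_pairCov_neg hcov hiii₁ hiii₂

/-- Sufficient conditions for a strictly negative boundary-to-interior assortativity
component (Theorem 6.2): boundary dominance of the means, endpoint mean dominance on
`B→I` arcs, positive endpoint variances, nonpositive within-group covariances and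
nonpositive between-group mean term, with at least one strict inequality, imply
`r_{B→I}(a) < 0`. -/
theorem negative_BI_component
    {V : Type*} [Fintype V] (K : ℕ)
    (Ed : Finset (V × V)) (P : V → Fin K) (a : V → ℝ)
    -- (i) boundary dominance
    (hi : ∀ k, (IntS Ed P k).Nonempty → (BdyS Ed P k).Nonempty →
      nodeMean (IntS Ed P k) a < nodeMean (BdyS Ed P k) a)
    -- (ii) B→I endpoint mean dominance on B→I arcs
    (hii : ∀ k, (EBIk Ed P k).Nonempty →
      nodeMean (BdyS Ed P k) a ≤ pairMean (EBIk Ed P k) (fun e => a e.1) ∧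
      pairMean (EBIk Ed P k) (fun e => a e.2) ≤ nodeMean (IntS Ed P k) a)
    -- (iii) nondegeneracy: positive endpoint variances on the B→I sample
    (hiii₁ : 0 < pairCov (EBI Ed P) (fun e => a e.1) (fun e => a e.1))
    (hiii₂ : 0 < pairCov (EBI Ed P) (fun e => a e.2) (fun e => a e.2))
    -- (iv) within-group nonpositive covariance
    (hiv : ∀ k, (EBIk Ed P k).Nonempty →
      pairCov (EBIk Ed P k) (fun e => a e.1) (fun e => a e.2) ≤ 0)
    -- (v) between-group mean term nonpositive
    (hv : ∑ k, (((EBIk Ed P k).card : ℝ) / (EBI Ed P).card)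
        * (pairMean (EBIk Ed P k) (fun e => a e.1) - pairMean (EBI Ed P) (fun e => a e.1))
        * (pairMean (EBIk Ed P k) (fun e => a e.2) - pairMean (EBI Ed P) (fun e => a e.2))
        ≤ 0)
    -- at least one of (iv), (v) strict
    (hstrict :
      (∃ k, (EBIk Ed P k).Nonempty ∧
        pairCov (EBIk Ed P k) (fun e => a e.1) (fun e => a e.2) < 0) ∨
      ∑ k, (((EBIk Ed P k).card : ℝ) / (EBI Ed P).card)
        * (pairMean (EBIk Ed P k) (fun e => a e.1) - pairMean (EBI Ed P) (fun e => a e.1))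
        * (pairMean (EBIk Ed P k) (fun e => a e.2) - pairMean (EBI Ed P) (fun e => a e.2))
        < 0) :
    pairCorr (EBI Ed P) (fun e => a e.1) (fun e => a e.2) < 0 :=
  negative_BI_component_general K Ed P a hiii₁ hiii₂ hiv hv hstrict
end

section
/- In the setting of a finite undirected graph with symmetric nonnegative adjacency A that is P-multipartite for a partition P = {V_1,...,V_K}, with P-consistent attribute x, m = (1/2)Σ_{i,j}A_{ij} > 0, a_p = (1/(2m))Σ_{i∈V_p}Σ_j A_{ij}, and Σ_p a_p² < 1, the assortativity coefficient ρ(x) = −(Σ_p a_p²)/(1 − Σ_p a_p²) equals −1 if and only if there exist exactly two blocks p ≠ q with a_p = a_q = 1/2 and a_r = 0 for all other blocks r (i.e. the edge mass is supported on exactly two parts, each carrying half of the edge ends). -/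
open Finset
open scoped Classical

/-! Since the block volumes `a_p` are nonnegative and sum to `1`, and a block without inner
edges can carry at most half of the edge ends, every `a_p` lies in `[0, 1/2]`.
Then `ρ = -1` means `Σ a_p² = 1/2`, i.e. `Σ a_p (1/2 - a_p) = 0`, a sum of nonnegative
terms; so every `a_p` is `0` or `1/2`, and summing to `1` forces exactly two halves. -/

section BlockVolume

variable {V : Type*} [Fintype V] (A : V → V → ℝ)

theorem two_mul_sum_degree_le_of_independent (hsym : ∀ i j, A i j = A j i)
    (hnn : ∀ i j, 0 ≤ A i j) (T : Finset V) (hT : ∀ i ∈ T, ∀ j ∈ T, A i j = 0) :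
    2 * ∑ i ∈ T, ∑ j, A i j ≤ ∑ i, ∑ j, A i j := by
  have hcut : ∑ i ∈ T, ∑ j, A i j = ∑ i ∈ T, ∑ j ∈ Tᶜ, A i j := by
    refine sum_congr rfl fun i hi => ?_
    rw [← sum_add_sum_compl T, sum_eq_zero fun j hj => hT i hi j hj, zero_add]
  have hcut_le : ∑ i ∈ T, ∑ j ∈ Tᶜ, A i j ≤ ∑ j ∈ Tᶜ, ∑ i, A j i := by
    rw [sum_comm]
    refine sum_le_sum fun j _ => ?_
    simp_rw [hsym _ j]
    exact sum_le_sum_of_subset_of_nonneg (subset_univ T) fun i _ _ => hnn j i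
  have hsplit := sum_add_sum_compl T fun i => ∑ j, A i j
  linarith

variable {K : ℕ} (P : V → Fin K)

theorem sum_block_degree_nonneg (hnn : ∀ i j, 0 ≤ A i j) (p : Fin K) :
    0 ≤ ∑ i ∈ univ.filter (fun i => P i = p), ∑ j, A i j :=
  sum_nonneg fun i _ => sum_nonneg fun j _ => hnn i j

theorem two_mul_sum_block_degree_le (hsym : ∀ i j, A i j = A j i) (hnn : ∀ i j, 0 ≤ A i j)
    (hmp : ∀ i j, P i = P j → A i j = 0) (p : Fin K) :
    2 * ∑ i ∈ univ.filter (fun i => P i = p), ∑ j, A i j ≤ ∑ i, ∑ j, A i j := by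
  refine two_mul_sum_degree_le_of_independent A hsym hnn _ fun i hi j hj => hmp i j ?_
  rw [(mem_filter.1 hi).2, (mem_filter.1 hj).2]

end BlockVolume

theorem neg_div_one_sub_eq_neg_one_iff {S : ℝ} (hS : S ≠ 1) :
    -S / (1 - S) = -1 ↔ S = 1 / 2 := by
  rw [div_eq_iff (sub_ne_zero.2 hS.symm)]
  constructor <;> intro h <;> linarith

section HalfWeights

variable {ι : Type*} [Fintype ι] {a : ι → ℝ}

theorem eq_zero_or_eq_half_of_sum_sq_eq_half (h0 : ∀ i, 0 ≤ a i) (hhalf : ∀ i, a i ≤ 1 / 2)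
    (hsum : ∑ i, a i = 1) (hsq : ∑ i, a i ^ 2 = 1 / 2) (i : ι) : a i = 0 ∨ a i = 1 / 2 := by
  have hgap : ∑ i, a i * (1 / 2 - a i) = 0 := by
    simp only [mul_sub, sum_sub_distrib, ← sum_mul, hsum, ← sq, hsq]
    ring
  have hterm := (sum_eq_zero_iff_of_nonneg fun j _ =>
    mul_nonneg (h0 j) (sub_nonneg.2 (hhalf j))).1 hgap i (mem_univ i)
  rcases mul_eq_zero.1 hterm with h | h
  · exact Or.inl h
  · exact Or.inr (by linarith)

theorem exists_pair_of_eq_zero_or_eq_half (hdich : ∀ i, a i = 0 ∨ a i = 1 / 2)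
    (hsum : ∑ i, a i = 1) :
    ∃ p q, p ≠ q ∧ a p = 1 / 2 ∧ a q = 1 / 2 ∧ ∀ r, r ≠ p → r ≠ q → a r = 0 := by
  set T := univ.filter fun i => a i ≠ 0
  have hT : ∀ i ∈ T, a i = 1 / 2 := fun i hi =>
    (hdich i).resolve_left (mem_filter.1 hi).2
  have hsumT : ∑ i ∈ T, a i = 1 := by
    rw [← hsum]
    exact sum_subset (subset_univ T) fun i _ hi => by simpa [T] using hi
  have hcard : T.card = 2 := by
    rw [sum_congr rfl hT, sum_const, nsmul_eq_mul] at hsumT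
    exact_mod_cast (by linarith : (T.card : ℝ) = 2)
  obtain ⟨p, q, hpq, hTpq⟩ := card_eq_two.1 hcard
  refine ⟨p, q, hpq, hT p (by simp [hTpq]), hT q (by simp [hTpq]), fun r hrp hrq => ?_⟩
  by_contra hr
  have : r ∈ T := by simp [T, hr]
  simp [hTpq, hrp, hrq] at this

theorem sum_sq_eq_half_of_pair {p q : ι} (hpq : p ≠ q) (hp : a p = 1 / 2) (hq : a q = 1 / 2)
    (hrest : ∀ r, r ≠ p → r ≠ q → a r = 0) : ∑ i, a i ^ 2 = 1 / 2 := by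
  rw [← sum_subset (subset_univ {p, q}) fun r _ hr => by
    simp only [mem_insert, mem_singleton, not_or] at hr
    simp [hrest r hr.1 hr.2]]
  rw [sum_pair hpq, hp, hq]
  norm_num

end HalfWeights

/-- Equality characterization for multipartite assortativity: in the multipartite
setting with `P`-consistent attribute, the assortativity coefficient
`ρ(x) = -(Σ_p a_p²)/(1 - Σ_p a_p²)` equals `-1` if and only if the edge mass is
supported on exactly two blocks, each carrying half of the edge ends. -/
theorem multipartite_assortativity_eq_neg_one_iff
    {V : Type*} [Fintype V] (K : ℕ)
    (A : V → V → ℝ) (P : V → Fin K)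
    (hsym : ∀ i j, A i j = A j i)
    (hnn : ∀ i j, 0 ≤ A i j)
    (hmp : ∀ i j, P i = P j → A i j = 0)
    (m : ℝ) (hm : m = (1/2) * ∑ i, ∑ j, A i j) (hmpos : 0 < m)
    (a : Fin K → ℝ)
    (ha : ∀ p, a p = (1/(2*m)) * ∑ i ∈ Finset.univ.filter (fun i => P i = p), ∑ j, A i j)
    (hS : ∑ p, (a p)^2 < 1) :
    (- (∑ p, (a p)^2) / (1 - ∑ p, (a p)^2) = -1)
      ↔ ∃ p q : Fin K, p ≠ q ∧ a p = 1/2 ∧ a q = 1/2 ∧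
          ∀ r, r ≠ p → r ≠ q → a r = 0 := by
  have htotal : ∑ i, ∑ j, A i j = 2 * m := by rw [hm]; ring
  have ha' : ∀ p, a p = (∑ i ∈ univ.filter (fun i => P i = p), ∑ j, A i j) / (2 * m) :=
    fun p => by rw [ha, one_div_mul_eq_div]
  have h0 : ∀ p, 0 ≤ a p := fun p => by
    rw [ha']; exact div_nonneg (sum_block_degree_nonneg A P hnn p) (by positivity)
  have hhalf : ∀ p, a p ≤ 1 / 2 := fun p => by
    rw [ha', div_le_iff₀ (by positivity)]
    linarith [two_mul_sum_block_degree_le A P hsym hnn hmp p]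
  have hsum : ∑ p, a p = 1 := by
    simp_rw [ha', ← sum_div, sum_fiberwise univ P fun i => ∑ j, A i j, htotal]
    exact div_self (by positivity)
  rw [neg_div_one_sub_eq_neg_one_iff hS.ne]
  constructor
  · intro hsq
    exact exists_pair_of_eq_zero_or_eq_half
      (eq_zero_or_eq_half_of_sum_sq_eq_half h0 hhalf hsum hsq) hsum
  · rintro ⟨p, q, hpq, hp, hq, hrest⟩
    exact sum_sq_eq_half_of_pair hpq hp hq hrest
end

section
/- Let n ≥ 1, let u_1, ..., u_n be an orthonormal basis of Euclidean ℝⁿ, and let λ_1 ≤ λ_2 ≤ ... ≤ λ_n be real numbers with λ_i > 0 for all i ≥ 2. Fix a coordinate index v ∈ {1,...,n} and an integer k ≥ 0 with k + 2 ≤ n, and define s_k(v) = Σ_{i=2}^{k+1} u_i(v)²/λ_i and s_∞(v) = Σ_{i=2}^{n} u_i(v)²/λ_i. Then 0 ≤ s_∞(v) − s_k(v) ≤ 1/λ_{k+2}. -/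
open Finset

lemma col_sum_one (n : ℕ) (u : Fin n → Fin n → ℝ)
    (horth : ∀ i j : Fin n, (∑ v, u i v * u j v) = if i = j then (1 : ℝ) else 0)
    (v : Fin n) : (∑ i, (u i v)^2) = 1 := by
  let M : Matrix (Fin n) (Fin n) ℝ := Matrix.of u
  have h1 : M * M.transpose = 1 := by
    ext i j
    simp [Matrix.mul_apply, Matrix.transpose_apply, M, horth i j, Matrix.one_apply]
  have h2 : M.transpose * M = 1 := mul_eq_one_comm.mp h1
  have := congrFun (congrFun h2 v) v
  simpa [Matrix.mul_apply, Matrix.transpose_apply, M, Matrix.one_apply, pow_two] using this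

/-- Sharp tail bound for the truncated spectral proxy (Proposition 8.1): if
`u_1, ..., u_n` is an orthonormal basis of Euclidean `ℝⁿ` (stated in coordinates:
the matrix of the `u_i` is orthogonal) and `λ_1 ≤ ... ≤ λ_n` with `λ_i > 0` for
`i ≥ 2`, then for every coordinate `v` and truncation level `k` with `k + 2 ≤ n`,
`0 ≤ s_∞(v) - s_k(v) ≤ 1/λ_{k+2}`.  Indices are 0-based in this formalization:
the 1-based index `i` corresponds to the 0-based index `i - 1`, so `s_k` sums over
0-based indices `1 ≤ i ≤ k`, `s_∞` over `1 ≤ i ≤ n-1`, and `λ_{k+2}` is `lam ⟨k+1, _⟩`. -/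
theorem truncated_spectral_proxy_tail_bound
    (n : ℕ) (hn : 1 ≤ n)
    (u : Fin n → Fin n → ℝ) (lam : Fin n → ℝ)
    (horth : ∀ i j : Fin n, (∑ v, u i v * u j v) = if i = j then (1 : ℝ) else 0)
    (hmono : Monotone lam)
    (hpos : ∀ i : Fin n, 1 ≤ (i : ℕ) → 0 < lam i)
    (v : Fin n) (k : ℕ) (hk : k + 2 ≤ n) :
    0 ≤ (∑ i ∈ Finset.univ.filter (fun i : Fin n => 1 ≤ (i : ℕ)), (u i v)^2 / lam i)
        - (∑ i ∈ Finset.univ.filter (fun i : Fin n => 1 ≤ (i : ℕ) ∧ (i : ℕ) ≤ k),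
            (u i v)^2 / lam i) ∧
    (∑ i ∈ Finset.univ.filter (fun i : Fin n => 1 ≤ (i : ℕ)), (u i v)^2 / lam i)
        - (∑ i ∈ Finset.univ.filter (fun i : Fin n => 1 ≤ (i : ℕ) ∧ (i : ℕ) ≤ k),
            (u i v)^2 / lam i)
      ≤ 1 / lam ⟨k + 1, by omega⟩ := by
  set j : Fin n := ⟨k + 1, by omega⟩ with hj
  have hsplit : (Finset.univ.filter (fun i : Fin n => 1 ≤ (i : ℕ)))
      = (Finset.univ.filter (fun i : Fin n => 1 ≤ (i : ℕ) ∧ (i : ℕ) ≤ k))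
        ∪ (Finset.univ.filter (fun i : Fin n => k + 1 ≤ (i : ℕ))) := by
    ext i; simp only [mem_filter, mem_union, mem_univ, true_and]; omega
  have hdisj : Disjoint (Finset.univ.filter (fun i : Fin n => 1 ≤ (i : ℕ) ∧ (i : ℕ) ≤ k))
      (Finset.univ.filter (fun i : Fin n => k + 1 ≤ (i : ℕ))) := by
    rw [disjoint_filter]; intro i _ h1 h2; omega
  have hdiff : (∑ i ∈ Finset.univ.filter (fun i : Fin n => 1 ≤ (i : ℕ)), (u i v)^2 / lam i)
        - (∑ i ∈ Finset.univ.filter (fun i : Fin n => 1 ≤ (i : ℕ) ∧ (i : ℕ) ≤ k),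
            (u i v)^2 / lam i)
      = ∑ i ∈ Finset.univ.filter (fun i : Fin n => k + 1 ≤ (i : ℕ)), (u i v)^2 / lam i := by
    rw [hsplit, Finset.sum_union hdisj]; ring
  rw [hdiff]
  have hjpos : 0 < lam j := hpos j (by simp [hj])
  constructor
  · apply Finset.sum_nonneg
    intro i hi
    simp only [mem_filter, mem_univ, true_and] at hi
    have : 0 < lam i := hpos i (by omega)
    positivity
  · have hbound : ∀ i ∈ Finset.univ.filter (fun i : Fin n => k + 1 ≤ (i : ℕ)),
        (u i v)^2 / lam i ≤ (u i v)^2 * (1 / lam j) := by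
      intro i hi
      simp only [mem_filter, mem_univ, true_and] at hi
      have hji : j ≤ i := by simpa [hj, Fin.le_def] using hi
      have hipos : 0 < lam i := hpos i (by omega)
      rw [div_eq_mul_one_div]
      apply mul_le_mul_of_nonneg_left _ (sq_nonneg _)
      exact one_div_le_one_div_of_le hjpos (hmono hji)
    calc ∑ i ∈ Finset.univ.filter (fun i : Fin n => k + 1 ≤ (i : ℕ)), (u i v)^2 / lam i
        ≤ ∑ i ∈ Finset.univ.filter (fun i : Fin n => k + 1 ≤ (i : ℕ)), (u i v)^2 * (1 / lam j) :=
          Finset.sum_le_sum hbound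
      _ = (∑ i ∈ Finset.univ.filter (fun i : Fin n => k + 1 ≤ (i : ℕ)), (u i v)^2) * (1 / lam j) := by
          rw [Finset.sum_mul]
      _ ≤ 1 * (1 / lam j) := by
          apply mul_le_mul_of_nonneg_right _ (by positivity)
          calc (∑ i ∈ Finset.univ.filter (fun i : Fin n => k + 1 ≤ (i : ℕ)), (u i v)^2)
              ≤ ∑ i, (u i v)^2 :=
                Finset.sum_le_sum_of_subset_of_nonneg (Finset.filter_subset _ _)
                  (fun i _ _ => sq_nonneg _)
            _ = 1 := col_sum_one n u horth v
      _ = 1 / lam j := one_mul _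
end

section
/- Let n ≥ 1, let A be an n×n real matrix with nonnegative entries, let β, δ > 0, and let f : ℝⁿ → ℝⁿ be the SIS vector field f_i(x) = −δ x_i + (1 − x_i) β Σ_{j=1}^n A_{ji} x_j. If x : ℝ → ℝⁿ is a solution of ẋ = f(x) (i.e. each component x_i is differentiable with x_i'(t) = f_i(x(t)) for all t) and x(0) ∈ [0,1]ⁿ, then x(t) ∈ [0,1]ⁿ for all t ≥ 0. -/
open Finset Topology

/-! Grönwall applied to `Σᵢ ((xᵢ)⁻)²`, which vanishes at time 0: on a compact time interval the
solution is bounded, which turns the cubic term coming from the factor `1 - xᵢ` into a linear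
bound, so the negative parts stay zero and `x ≥ 0`. Once `x ≥ 0` the infection pressure
`Σⱼ Aⱼᵢ xⱼ` is nonnegative, and the same argument for `1 - x`, now with rate 0, gives `x ≤ 1`. -/

theorem negPart_mul_self (a : ℝ) : a⁻ * a = -a⁻ ^ 2 := by
  rcases le_total a 0 with ha | ha
  · rw [negPart_eq_neg.2 ha]; ring
  · rw [negPart_eq_zero.2 ha]; ring

theorem hasDerivAt_negPart_sq (a : ℝ) : HasDerivAt (fun u : ℝ => u⁻ ^ 2) (-2 * a⁻) a := by
  rcases lt_trichotomy a 0 with ha | rfl | ha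
  · have hf : (fun u : ℝ => u⁻ ^ 2) =ᶠ[𝓝 a] fun u => u ^ 2 := by
      filter_upwards [eventually_lt_nhds ha] with u hu
      rw [negPart_eq_neg.2 hu.le, neg_sq]
    rw [negPart_eq_neg.2 ha.le]
    simpa using (hasDerivAt_pow 2 a).congr_of_eventuallyEq hf
  · have hIic : HasDerivWithinAt (fun u : ℝ => u⁻ ^ 2) 0 (Set.Iic 0) 0 := by
      refine (hasDerivAt_pow 2 (0 : ℝ)).hasDerivWithinAt.congr_of_mem (fun u hu => ?_)
        (Set.mem_Iic.2 le_rfl) |>.congr_deriv (by simp)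
      rw [negPart_eq_neg.2 hu, neg_sq]
    have hIci : HasDerivWithinAt (fun u : ℝ => u⁻ ^ 2) 0 (Set.Ici 0) 0 :=
      (hasDerivWithinAt_const _ _ 0).congr_of_mem (fun u hu => by rw [negPart_eq_zero.2 hu]; simp)
        (Set.mem_Ici.2 le_rfl)
    simpa [Set.Iic_union_Ici] using hIic.union hIci
  · have hf : (fun u : ℝ => u⁻ ^ 2) =ᶠ[𝓝 a] fun _ => 0 := by
      filter_upwards [eventually_gt_nhds ha] with u hu
      simp [negPart_eq_zero.2 hu.le]
    rw [negPart_eq_zero.2 ha.le]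
    simpa using (hasDerivAt_const a (0 : ℝ)).congr_of_eventuallyEq hf

theorem nonpos_of_hasDerivAt_le_mul {g g' : ℝ → ℝ} {a b K : ℝ}
    (hg : ∀ t ∈ Set.Icc a b, HasDerivAt g (g' t) t) (ha : g a ≤ 0)
    (hbound : ∀ t ∈ Set.Ico a b, g' t ≤ K * g t) :
    ∀ t ∈ Set.Icc a b, g t ≤ 0 := by
  intro t ht
  simpa only [gronwallBound_ε0_δ0] using le_gronwallBound_of_liminf_deriv_right_le (ε := 0)
    (fun t ht => (hg t ht).continuousAt.continuousWithinAt)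
    (fun t ht _ hr => (hg t (Set.Ico_subset_Icc_self ht)).hasDerivWithinAt.liminf_right_slope_le hr)
    ha (fun t ht => (hbound t ht).trans_eq (add_zero _).symm) t ht

theorem nonneg_of_sum_negPart_mul_deriv_le {ι : Type*} [Fintype ι] {y y' : ℝ → ι → ℝ}
    {a b C : ℝ} (hy : ∀ t ∈ Set.Icc a b, ∀ i, HasDerivAt (fun s => y s i) (y' t i) t)
    (ha : ∀ i, 0 ≤ y a i)
    (hbound : ∀ t ∈ Set.Ico a b, ∑ i, -(y t i)⁻ * y' t i ≤ C * ∑ i, (y t i)⁻ ^ 2) :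
    ∀ t ∈ Set.Icc a b, ∀ i, 0 ≤ y t i := by
  have hg : ∀ t ∈ Set.Icc a b, HasDerivAt (fun s => ∑ i, (y s i)⁻ ^ 2)
      (∑ i, -2 * (y t i)⁻ * y' t i) t := fun t ht =>
    HasDerivAt.fun_sum fun i _ => (hasDerivAt_negPart_sq _).comp t (hy t ht i)
  have hg0 := nonpos_of_hasDerivAt_le_mul (K := 2 * C) hg (by simp [negPart_eq_zero.2 (ha _)])
    fun t ht => by
      have hderiv : ∑ i, -2 * (y t i)⁻ * y' t i = 2 * ∑ i, -(y t i)⁻ * y' t i := by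
        rw [mul_sum]; exact sum_congr rfl fun i _ => by ring
      linarith [hbound t ht]
  intro t ht i
  have hsum := le_antisymm (hg0 t ht) (by positivity)
  rw [sum_eq_zero_iff_of_nonneg fun i _ => by positivity] at hsum
  simpa [negPart_eq_zero] using hsum i (mem_univ i)

theorem sum_mul_sum_mul_le_sum_mul_sum_sq {ι : Type*} [Fintype ι] {B : ι → ι → ℝ}
    (hB : ∀ i j, 0 ≤ B i j) (p : ι → ℝ) : ∑ i, p i * ∑ j, B j i * p j ≤ (∑ i, ∑ j, B i j) * ∑ k, p k ^ 2 := by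
  have hpp : ∀ i j, p i * p j ≤ ∑ k, p k ^ 2 := fun i j => by
    have hsq : ∀ k, p k ^ 2 ≤ ∑ k, p k ^ 2 := fun k =>
      single_le_sum (fun k _ => sq_nonneg (p k)) (mem_univ k)
    linarith [two_mul_le_add_sq (p i) (p j), hsq i, hsq j]
  calc ∑ i, p i * ∑ j, B j i * p j = ∑ i, ∑ j, B j i * (p i * p j) := by
        simp_rw [mul_sum]; exact sum_congr rfl fun i _ => sum_congr rfl fun j _ => by ring
    _ ≤ ∑ i, ∑ j, B j i * ∑ k, p k ^ 2 :=
        sum_le_sum fun i _ => sum_le_sum fun j _ => mul_le_mul_of_nonneg_left (hpp i j) (hB j i)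
    _ = (∑ i, ∑ j, B i j) * ∑ k, p k ^ 2 := by rw [sum_comm, sum_mul]; simp_rw [sum_mul]

section SIS

variable {ι : Type*} [Fintype ι] {A : ι → ι → ℝ} {β δ : ℝ}

def sisField (A : ι → ι → ℝ) (β δ : ℝ) (x : ι → ℝ) (i : ι) : ℝ :=
  -δ * x i + (1 - x i) * β * ∑ j, A j i * x j

theorem sum_negPart_mul_sisField_le (hA : ∀ i j, 0 ≤ A i j) (hβ : 0 ≤ β) (hδ : 0 ≤ δ)
    {K : ℝ} (hK : 0 ≤ K) {x : ι → ℝ} (hx : ∀ i, -K ≤ x i) :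
    ∑ i, -(x i)⁻ * sisField A β δ x i ≤ β * (1 + K) * (∑ i, ∑ j, A i j) * ∑ i, (x i)⁻ ^ 2 := by
  have hterm : ∀ i, -(x i)⁻ * sisField A β δ x i
      ≤ β * (1 + K) * ((x i)⁻ * ∑ j, A j i * (x j)⁻) := fun i => by
    set p := (x i)⁻
    set T := ∑ j, A j i * (x j)⁻
    have hp : 0 ≤ p := negPart_nonneg _
    have hpK : p ≤ K := sup_le (by linarith [hx i]) hK
    have hT : 0 ≤ T := sum_nonneg fun j _ => mul_nonneg (hA j i) (negPart_nonneg _)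
    have hST : -T ≤ ∑ j, A j i * x j := by
      rw [← sum_neg_distrib]
      exact sum_le_sum fun j _ => by nlinarith [hA j i, neg_le_negPart (x j)]
    have hpx : p * x i = -p ^ 2 := negPart_mul_self (x i)
    calc -p * sisField A β δ x i
        = -δ * p ^ 2 - β * (p + p ^ 2) * ∑ j, A j i * x j := by
          unfold sisField; linear_combination (δ + β * ∑ j, A j i * x j) * hpx
      _ ≤ β * (p + p ^ 2) * T := by nlinarith [mul_nonneg hβ (add_nonneg hp (sq_nonneg p))]
      _ ≤ β * (1 + K) * (p * T) := by nlinarith [mul_nonneg (mul_nonneg hβ hp) hT]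
  calc ∑ i, -(x i)⁻ * sisField A β δ x i
      ≤ ∑ i, β * (1 + K) * ((x i)⁻ * ∑ j, A j i * (x j)⁻) := sum_le_sum fun i _ => hterm i
    _ ≤ β * (1 + K) * ((∑ i, ∑ j, A i j) * ∑ i, (x i)⁻ ^ 2) := by
        rw [← mul_sum]; gcongr; exact sum_mul_sum_mul_le_sum_mul_sum_sq hA _
    _ = _ := by ring

theorem negPart_one_sub_mul_sisField_nonpos (hA : ∀ i j, 0 ≤ A i j) (hβ : 0 ≤ β) (hδ : 0 ≤ δ)
    {x : ι → ℝ} (hx : ∀ i, 0 ≤ x i) (i : ι) : (1 - x i)⁻ * sisField A β δ x i ≤ 0 := by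
  set q := (1 - x i)⁻
  have hq : 0 ≤ q := negPart_nonneg _
  have hS : 0 ≤ ∑ j, A j i * x j := sum_nonneg fun j _ => mul_nonneg (hA j i) (hx j)
  have hq1 : q * (1 - x i) = -q ^ 2 := negPart_mul_self _
  calc q * sisField A β δ x i = -δ * (q + q ^ 2) - β * q ^ 2 * ∑ j, A j i * x j := by
        unfold sisField; linear_combination (δ + β * ∑ j, A j i * x j) * hq1
    _ ≤ 0 := by
        nlinarith [mul_nonneg hδ (add_nonneg hq (sq_nonneg q)),
          mul_nonneg (mul_nonneg hβ (sq_nonneg q)) hS]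

end SIS

theorem SIS_forward_invariance_general
    (n : ℕ)
    (A : Fin n → Fin n → ℝ) (hA : ∀ i j, 0 ≤ A i j)
    (β δ : ℝ) (hβ : 0 < β) (hδ : 0 < δ)
    (x : ℝ → Fin n → ℝ)
    (hode : ∀ t : ℝ, ∀ i : Fin n,
      HasDerivAt (fun s => x s i)
        (-δ * x t i + (1 - x t i) * β * ∑ j, A j i * x t j) t)
    (h0 : ∀ i, x 0 i ∈ Set.Icc (0 : ℝ) 1) :
    ∀ t : ℝ, 0 ≤ t → ∀ i, x t i ∈ Set.Icc (0 : ℝ) 1 := by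
  intro T hT i
  have hcont : Continuous x :=
    continuous_pi fun j => continuous_iff_continuousAt.2 fun t => (hode t j).continuousAt
  obtain ⟨K, hK⟩ :=
    (isCompact_Icc (a := 0) (b := T)).exists_bound_of_continuousOn hcont.continuousOn
  have hK0 : 0 ≤ K := (norm_nonneg _).trans (hK 0 ⟨le_rfl, hT⟩)
  have hlower : ∀ t ∈ Set.Ico 0 T, ∀ j, -K ≤ x t j := fun t ht j =>
    neg_le_of_abs_le ((norm_le_pi_norm (x t) j).trans (hK t (Set.Ico_subset_Icc_self ht)))
  have hnonneg : ∀ t ∈ Set.Icc 0 T, ∀ j, 0 ≤ x t j :=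
    nonneg_of_sum_negPart_mul_deriv_le (fun t _ => hode t) (fun j => (h0 j).1) fun t ht =>
      sum_negPart_mul_sisField_le hA hβ.le hδ.le hK0 (hlower t ht)
  have hle_one : ∀ t ∈ Set.Icc 0 T, ∀ j, 0 ≤ 1 - x t j :=
    nonneg_of_sum_negPart_mul_deriv_le (y' := fun t j => -sisField A β δ (x t) j) (C := 0)
      (fun t _ j => (hode t j).const_sub 1) (fun j => sub_nonneg.2 (h0 j).2) fun t ht => by
        simp only [neg_mul_neg, zero_mul]
        exact sum_nonpos fun j _ => negPart_one_sub_mul_sisField_nonpos hA hβ.le hδ.le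
          (hnonneg t (Set.Ico_subset_Icc_self ht)) j
  exact ⟨hnonneg T ⟨hT, le_rfl⟩ i, sub_nonneg.1 (hle_one T ⟨hT, le_rfl⟩ i)⟩

/-- Forward invariance of the hypercube for the SIS dynamics (Proposition 9.1):
any solution of `ẋ_i = -δ x_i + (1 - x_i) β Σ_j A_{ji} x_j` starting in `[0,1]ⁿ`
remains in `[0,1]ⁿ` for all `t ≥ 0`. -/
theorem SIS_forward_invariance
    (n : ℕ) (hn : 1 ≤ n)
    (A : Fin n → Fin n → ℝ) (hA : ∀ i j, 0 ≤ A i j)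
    (β δ : ℝ) (hβ : 0 < β) (hδ : 0 < δ)
    (x : ℝ → Fin n → ℝ)
    (hode : ∀ t : ℝ, ∀ i : Fin n,
      HasDerivAt (fun s => x s i)
        (-δ * x t i + (1 - x t i) * β * ∑ j, A j i * x t j) t)
    (h0 : ∀ i, x 0 i ∈ Set.Icc (0 : ℝ) 1) :
    ∀ t : ℝ, 0 ≤ t → ∀ i, x t i ∈ Set.Icc (0 : ℝ) 1 :=
  SIS_forward_invariance_general n A hA β δ hβ hδ x hode h0
end

section
/- Let n ≥ 1 and let A be an n×n real matrix with nonnegative entries that is irreducible (for all i, j there exists m ≥ 1 with (A^m)_{ij} > 0; equivalently, the weighted digraph of A is strongly connected), and let β, δ > 0 satisfy β·ρ(A) > δ, where ρ(A) is the spectral radius of A. Then there exists a unique vector x* with 0 < x*_i < 1 for every i satisfying the endemic equilibrium equations δ x*_i = (1 − x*_i) β Σ_{j=1}^n A_{ji} x*_j for all i. -/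
/-!
Above the threshold some eigenvalue `μ` of `A` satisfies `δ < β ‖μ‖`. The moduli of a left
eigenvector form a nonnegative `u ≠ 0` with `‖μ‖ u ≤ u A`, and multiplying by `∑_{k < N} A ^ k`,
which is entrywise positive by irreducibility, makes it strictly positive.
The equilibria are the fixed points of `f x = β (x A) / (δ + β (x A))` (coordinatewise).
A small multiple `a` of that positive vector satisfies `a ≤ f a`; since `f` is monotone and maps
`[a, 1]` into itself, Knaster–Tarski gives a fixed point there.
For uniqueness, `f` is strictly subhomogeneous, `f (κ y) < κ f y` for `κ > 1`: if `x ≰ y` and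
`κ = x i / y i > 1` is the largest ratio, then `x i = f x i ≤ f (κ y) i < κ y i = x i`.
-/

open Finset Matrix

noncomputable def sisResponse (β δ t : ℝ) : ℝ := β * t / (δ + β * t)

section sisResponse

variable {β δ t : ℝ}

theorem sisResponse_lt_one (hβ : 0 < β) (hδ : 0 < δ) (ht : 0 ≤ t) : sisResponse β δ t < 1 := by
  have : 0 ≤ β * t := by positivity
  rw [sisResponse, div_lt_one (by linarith)]
  linarith

theorem monotoneOn_sisResponse (hβ : 0 < β) (hδ : 0 < δ) :
    MonotoneOn (sisResponse β δ) (Set.Ici 0) := by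
  intro s (hs : 0 ≤ s) t (ht : 0 ≤ t) hst
  rw [sisResponse, sisResponse, div_le_div_iff₀ (by positivity) (by positivity)]
  nlinarith [mul_le_mul_of_nonneg_left hst (by positivity : 0 ≤ β * δ)]

theorem sisResponse_mul_lt (hβ : 0 < β) (hδ : 0 < δ) (ht : 0 < t) {κ : ℝ} (hκ : 1 < κ) :
    sisResponse β δ (κ * t) < κ * sisResponse β δ t := by
  have hκ0 : 0 < κ := one_pos.trans hκ
  rw [sisResponse, sisResponse, mul_div_assoc', div_lt_div_iff₀ (by positivity) (by positivity)]
  nlinarith [mul_pos (by positivity : 0 < κ * (β * β * (t * t))) (sub_pos.mpr hκ)]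

theorem le_sisResponse_mul (hδ : 0 < δ) {c : ℝ} (hc : 0 ≤ β * c) (ht : 0 ≤ t)
    (h : β * c * t ≤ β * c - δ) : t ≤ sisResponse β δ (c * t) := by
  rw [sisResponse, le_div_iff₀ (by nlinarith)]
  nlinarith [mul_le_mul_of_nonneg_left h ht]

theorem eq_sisResponse_iff (hβ : 0 < β) (hδ : 0 < δ) {x s : ℝ} (hs : 0 ≤ s) :
    δ * x = (1 - x) * β * s ↔ x = sisResponse β δ s := by
  rw [sisResponse, eq_div_iff (by positivity)]
  constructor <;> intro h <;> linarith

end sisResponse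

theorem Matrix.vecMul_le_vecMul_of_nonneg {m n α : Type*} [Fintype m] [Semiring α]
    [PartialOrder α] [IsOrderedRing α] {M : Matrix m n α} (hM : ∀ i j, 0 ≤ M i j)
    {x y : m → α} (h : x ≤ y) : x ᵥ* M ≤ y ᵥ* M :=
  fun j => Finset.sum_le_sum fun i _ => mul_le_mul_of_nonneg_right (h i) (hM i j)

theorem Matrix.vecMul_nonneg {m n α : Type*} [Fintype m] [Semiring α]
    [PartialOrder α] [IsOrderedRing α] {M : Matrix m n α} (hM : ∀ i j, 0 ≤ M i j)
    {x : m → α} (hx : 0 ≤ x) : 0 ≤ x ᵥ* M := by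
  simpa using vecMul_le_vecMul_of_nonneg hM hx

theorem exists_mem_spectrum_lt_mul_norm {𝕜 R : Type*} [NormedField 𝕜] [Ring R] [Algebra 𝕜 R]
    {a : R} {β δ : ℝ} (h : ENNReal.ofReal δ < ENNReal.ofReal β * spectralRadius 𝕜 a) :
    ∃ k ∈ spectrum 𝕜 a, δ < β * ‖k‖ := by
  simp only [spectralRadius, ENNReal.mul_iSup, lt_iSup_iff] at h
  obtain ⟨k, hk, h⟩ := h
  rw [← enorm_eq_nnnorm, ← ofReal_norm, ← ENNReal.ofReal_mul' (norm_nonneg k),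
    ENNReal.ofReal_lt_ofReal_iff'] at h
  exact ⟨k, hk, h.1⟩

theorem Matrix.exists_vecMul_eq_smul_of_mem_spectrum {ι K : Type*} [Fintype ι] [DecidableEq ι]
    [Field K] {M : Matrix ι ι K} {μ : K} (h : μ ∈ spectrum K M) :
    ∃ w ≠ 0, w ᵥ* M = μ • w := by
  have hdet : (algebraMap K _ μ - M).det = 0 := by
    rw [spectrum.mem_iff, isUnit_iff_isUnit_det, isUnit_iff_ne_zero, not_not] at h
    exact h
  obtain ⟨w, hw0, hw⟩ := exists_vecMul_eq_zero_iff.mpr hdet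
  refine ⟨w, hw0, ?_⟩
  rwa [vecMul_sub, sub_eq_zero, Algebra.algebraMap_eq_smul_one, vecMul_smul, vecMul_one,
    eq_comm] at hw

theorem norm_smul_le_vecMul_norm {ι : Type*} [Fintype ι] {A : Matrix ι ι ℝ}
    (hA : ∀ i j, 0 ≤ A i j) {w : ι → ℂ} {μ : ℂ} (hw : w ᵥ* A.map Complex.ofReal = μ • w) :
    ‖μ‖ • (fun i => ‖w i‖) ≤ (fun i => ‖w i‖) ᵥ* A := fun i => calc
  ‖μ‖ * ‖w i‖ = ‖∑ j, w j * A j i‖ := by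
    rw [← norm_mul, ← smul_eq_mul, ← Pi.smul_apply, ← hw]; rfl
  _ ≤ ∑ j, ‖w j * A j i‖ := norm_sum_le _ _
  _ = ∑ j, ‖w j‖ * A j i := by
    simp only [norm_mul, Complex.norm_real, Real.norm_of_nonneg (hA _ i)]

theorem Matrix.IsIrreducible.exists_sum_pow_pos {ι : Type*} [Fintype ι] [DecidableEq ι]
    {A : Matrix ι ι ℝ} (hA : A.IsIrreducible) :
    ∃ N, ∀ i j, 0 < (∑ k ∈ range N, A ^ k) i j := by
  choose m _ hm using (isIrreducible_iff_exists_pow_pos hA.nonneg).mp hA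
  obtain ⟨N, hN⟩ := Finite.bddAbove_range fun p : ι × ι => m p.1 p.2
  refine ⟨N + 1, fun i j => ?_⟩
  rw [sum_apply]
  exact sum_pos' (fun k _ => pow_apply_nonneg hA.nonneg k i j)
    ⟨m i j, mem_range.mpr (Nat.lt_succ_of_le (hN ⟨(i, j), rfl⟩)), hm i j⟩

theorem Matrix.IsIrreducible.exists_pos_smul_le_vecMul {ι : Type*} [Fintype ι] [DecidableEq ι]
    {A : Matrix ι ι ℝ} (hA : A.IsIrreducible) {c : ℝ} {u : ι → ℝ} (hu : 0 ≤ u) (hu0 : u ≠ 0)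
    (hcu : c • u ≤ u ᵥ* A) : ∃ v, (∀ i, 0 < v i) ∧ c • v ≤ v ᵥ* A := by
  obtain ⟨N, hQ⟩ := hA.exists_sum_pow_pos
  set Q := ∑ k ∈ range N, A ^ k
  have hQA : Commute Q A := Commute.sum_left _ _ _ fun k _ => Commute.pow_left (Commute.refl A) k
  obtain ⟨j, hj⟩ : ∃ j, u j ≠ 0 := Function.ne_iff.mp hu0
  refine ⟨u ᵥ* Q, fun i => ?_, ?_⟩
  · exact sum_pos' (fun k _ => mul_nonneg (hu k) (hQ k i).le)
      ⟨j, mem_univ j, mul_pos ((hu j).lt_of_ne' hj) (hQ j i)⟩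
  · calc c • (u ᵥ* Q) = (c • u) ᵥ* Q := (smul_vecMul c u Q).symm
      _ ≤ u ᵥ* A ᵥ* Q := vecMul_le_vecMul_of_nonneg (fun i j => (hQ i j).le) hcu
      _ = u ᵥ* Q ᵥ* A := by rw [vecMul_vecMul, vecMul_vecMul, hQA.eq]

theorem exists_isFixedPt_of_mapsTo_Icc {α : Type*} [ConditionallyCompleteLattice α]
    {f : α → α} {a b : α} (hab : a ≤ b) (hf : MonotoneOn f (Set.Icc a b))
    (hmaps : Set.MapsTo f (Set.Icc a b) (Set.Icc a b)) :
    ∃ x ∈ Set.Icc a b, Function.IsFixedPt f x := by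
  have : Fact (a ≤ b) := ⟨hab⟩
  let g : Set.Icc a b →o Set.Icc a b := ⟨hmaps.restrict, fun x y hxy => hf x.2 y.2 hxy⟩
  exact ⟨g.lfp, g.lfp.2, congrArg Subtype.val g.map_lfp⟩

theorem le_of_isFixedPt_of_smul_lt {ι : Type*} [Finite ι] {f : (ι → ℝ) → ι → ℝ}
    (hf : MonotoneOn f (Set.Ici 0)) {x y : ι → ℝ} (hx : Function.IsFixedPt f x)
    (hx0 : 0 ≤ x) (hy : Function.IsFixedPt f y) (hy0 : ∀ i, 0 < y i)
    (hsub : ∀ κ : ℝ, 1 < κ → ∀ i, f (κ • y) i < κ * f y i) : x ≤ y := by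
  by_contra hxy
  obtain ⟨i₁, hi₁⟩ : ∃ i, y i < x i := by simpa [Pi.le_def] using hxy
  have : Nonempty ι := ⟨i₁⟩
  obtain ⟨i₀, hi₀⟩ := Finite.exists_max fun i => x i / y i
  set κ := x i₀ / y i₀
  have hκ : 1 < κ := ((one_lt_div (hy0 i₁)).mpr hi₁).trans_le (hi₀ i₁)
  have hxκy : x ≤ κ • y := fun i => (div_le_iff₀ (hy0 i)).mp (hi₀ i)
  have hκy0 : 0 ≤ κ • y := le_trans hx0 hxκy
  have : x i₀ < x i₀ := calc
    x i₀ = f x i₀ := (congrFun hx i₀).symm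
    _ ≤ f (κ • y) i₀ := hf hx0 hκy0 hxκy i₀
    _ < κ * f y i₀ := hsub κ hκ i₀
    _ = κ * y i₀ := by rw [hy]
    _ = x i₀ := div_mul_cancel₀ _ (hy0 i₀).ne'
  exact this.false

noncomputable def endemicMap {ι : Type*} [Fintype ι] (β δ : ℝ) (A : Matrix ι ι ℝ)
    (x : ι → ℝ) : ι → ℝ :=
  fun i => sisResponse β δ ((x ᵥ* A) i)

section endemicMap

variable {ι : Type*} [Fintype ι] {β δ : ℝ} {A : Matrix ι ι ℝ} {x : ι → ℝ}

theorem monotoneOn_endemicMap (hA : ∀ i j, 0 ≤ A i j) (hβ : 0 < β) (hδ : 0 < δ) :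
    MonotoneOn (endemicMap β δ A) (Set.Ici 0) := fun _ hx _ hy hxy i =>
  monotoneOn_sisResponse hβ hδ (vecMul_nonneg hA hx i) (vecMul_nonneg hA hy i)
    (vecMul_le_vecMul_of_nonneg hA hxy i)

theorem endemicMap_lt_one (hA : ∀ i j, 0 ≤ A i j) (hβ : 0 < β) (hδ : 0 < δ) (hx : 0 ≤ x)
    (i : ι) : endemicMap β δ A x i < 1 :=
  sisResponse_lt_one hβ hδ (vecMul_nonneg hA hx i)

theorem endemicMap_smul_lt (hA : ∀ i j, 0 ≤ A i j) (hβ : 0 < β) (hδ : 0 < δ) (hx : 0 ≤ x)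
    {i : ι} (hpos : 0 < endemicMap β δ A x i) {κ : ℝ} (hκ : 1 < κ) :
    endemicMap β δ A (κ • x) i < κ * endemicMap β δ A x i := by
  have hs : 0 < (x ᵥ* A) i := by
    refine (vecMul_nonneg hA hx i).lt_of_ne fun h => ?_
    simp [endemicMap, ← h, sisResponse] at hpos
  simpa only [endemicMap, smul_vecMul, Pi.smul_apply, smul_eq_mul] using
    sisResponse_mul_lt hβ hδ hs hκ

theorem isFixedPt_endemicMap_iff (hA : ∀ i j, 0 ≤ A i j) (hβ : 0 < β) (hδ : 0 < δ)
    (hx : 0 ≤ x) :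
    Function.IsFixedPt (endemicMap β δ A) x ↔
      ∀ i, δ * x i = (1 - x i) * β * ∑ j, A j i * x j := by
  have hsum : ∀ i, ∑ j, A j i * x j = (x ᵥ* A) i := fun i => by
    simp only [vecMul, dotProduct, mul_comm]
  simp only [hsum, eq_sisResponse_iff hβ hδ (vecMul_nonneg hA hx _)]
  exact ⟨fun h i => (congrFun h i).symm, fun h => funext fun i => (h i).symm⟩

theorem exists_isFixedPt_endemicMap (hA : ∀ i j, 0 ≤ A i j) (hβ : 0 < β) (hδ : 0 < δ)
    {c : ℝ} (hc : δ < β * c) {v : ι → ℝ} (hv : ∀ i, 0 < v i) (hcv : c • v ≤ v ᵥ* A) :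
    ∃ x, Function.IsFixedPt (endemicMap β δ A) x ∧ ∀ i, 0 < x i := by
  have hβc : 0 < β * c := hδ.trans hc
  have hc0 : 0 < c := pos_of_mul_pos_right hβc hβ.le
  set r := (β * c - δ) / (β * c)
  have hr : 0 < r := div_pos (by linarith) hβc
  have hV : 0 < 1 + ∑ j, v j := add_pos_of_pos_of_nonneg one_pos (sum_nonneg fun j _ => (hv j).le)
  obtain ⟨ε, hε, hεv⟩ : ∃ ε > 0, ∀ i, ε * v i ≤ r := by
    refine ⟨r / (1 + ∑ j, v j), div_pos hr hV, fun i => ?_⟩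
    rw [div_mul_eq_mul_div, div_le_iff₀ hV]
    exact mul_le_mul_of_nonneg_left
      (le_add_of_nonneg_of_le zero_le_one (single_le_sum (fun j _ => (hv j).le) (mem_univ i)))
      hr.le
  set a := ε • v
  have ha_pos : ∀ i, 0 < a i := fun i => mul_pos hε (hv i)
  have ha0 : 0 ≤ a := fun i => (ha_pos i).le
  have hca : c • a ≤ a ᵥ* A := by
    rw [smul_comm, smul_vecMul]
    exact smul_le_smul_of_nonneg_left hcv hε.le
  have ha_sub : a ≤ endemicMap β δ A a := fun i => calc
    a i ≤ sisResponse β δ (c * a i) := le_sisResponse_mul hδ hβc.le (ha0 i) (by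
      have := mul_le_mul_of_nonneg_left (hεv i) hβc.le
      rwa [mul_div_cancel₀ _ hβc.ne'] at this)
    _ ≤ endemicMap β δ A a i := monotoneOn_sisResponse hβ hδ
      (mul_pos hc0 (ha_pos i)).le (vecMul_nonneg hA ha0 i) (hca i)
  have hmono := monotoneOn_endemicMap hA hβ hδ
  have hIcc : Set.Icc a 1 ⊆ Set.Ici 0 := fun x hx => ha0.trans hx.1
  obtain ⟨x, hx, hfix⟩ := exists_isFixedPt_of_mapsTo_Icc
    (ha_sub.trans fun i => (endemicMap_lt_one hA hβ hδ ha0 i).le) (hmono.mono hIcc)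
    fun x hx => ⟨ha_sub.trans (hmono ha0 (hIcc hx) hx.1),
      fun i => (endemicMap_lt_one hA hβ hδ (hIcc hx) i).le⟩
  exact ⟨x, hfix, fun i => (ha_pos i).trans_le (hx.1 i)⟩

theorem le_of_isFixedPt_endemicMap (hA : ∀ i j, 0 ≤ A i j) (hβ : 0 < β) (hδ : 0 < δ)
    {y : ι → ℝ} (hx : Function.IsFixedPt (endemicMap β δ A) x) (hx0 : 0 ≤ x)
    (hy : Function.IsFixedPt (endemicMap β δ A) y) (hy0 : ∀ i, 0 < y i) : x ≤ y :=
  le_of_isFixedPt_of_smul_lt (monotoneOn_endemicMap hA hβ hδ) hx hx0 hy hy0 fun _ hκ i =>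
    endemicMap_smul_lt hA hβ hδ (fun j => (hy0 j).le) (hy.symm ▸ hy0 i) hκ

end endemicMap

theorem SIS_endemic_equilibrium_general
    (n : ℕ)
    (A : Matrix (Fin n) (Fin n) ℝ)
    (hA : ∀ i j, 0 ≤ A i j)
    (hirr : ∀ i j, ∃ m : ℕ, 1 ≤ m ∧ 0 < (A ^ m) i j)
    (β δ : ℝ) (hβ : 0 < β) (hδ : 0 < δ)
    (hthr : ENNReal.ofReal δ
      < ENNReal.ofReal β * spectralRadius ℂ (A.map Complex.ofReal)) :
    ∃! xstar : Fin n → ℝ,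
      (∀ i, xstar i ∈ Set.Ioo (0 : ℝ) 1) ∧
      ∀ i, δ * xstar i = (1 - xstar i) * β * ∑ j, A j i * xstar j := by
  obtain ⟨μ, hμ, hμδ⟩ := exists_mem_spectrum_lt_mul_norm hthr
  obtain ⟨w, hw0, hw⟩ := exists_vecMul_eq_smul_of_mem_spectrum hμ
  have hu0 : (fun i => ‖w i‖) ≠ 0 := fun h => hw0 (funext fun i => norm_eq_zero.mp (congrFun h i))
  obtain ⟨v, hv, hμv⟩ := ((isIrreducible_iff_exists_pow_pos hA).mpr hirr).exists_pos_smul_le_vecMul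
    (fun i => norm_nonneg _) hu0 (norm_smul_le_vecMul_norm hA hw)
  obtain ⟨x, hx, hx_pos⟩ := exists_isFixedPt_endemicMap hA hβ hδ hμδ hv hμv
  have hx0 : 0 ≤ x := fun i => (hx_pos i).le
  refine ⟨x, ⟨fun i => ⟨hx_pos i, congrFun hx i ▸ endemicMap_lt_one hA hβ hδ hx0 i⟩,
    (isFixedPt_endemicMap_iff hA hβ hδ hx0).mp hx⟩, fun z ⟨hz, hz_eq⟩ => ?_⟩
  have hz0 : 0 ≤ z := fun i => (hz i).1.le
  have hz_fix := (isFixedPt_endemicMap_iff hA hβ hδ hz0).mpr hz_eq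
  exact le_antisymm (le_of_isFixedPt_endemicMap hA hβ hδ hz_fix hz0 hx hx_pos)
    (le_of_isFixedPt_endemicMap hA hβ hδ hx hx0 hz_fix fun i => (hz i).1)

/-- Endemic equilibrium of the SIS model above the epidemic threshold (Theorem 9.2,
existence and uniqueness part): if the nonnegative matrix `A` is irreducible and
`β · ρ(A) > δ` (with `ρ(A)` the spectral radius of `A`), then there is a unique
vector `x*` with `0 < x*_i < 1` for all `i` satisfying the endemic equilibrium
equations `δ x*_i = (1 - x*_i) β Σ_j A_{ji} x*_j`. -/
theorem SIS_endemic_equilibrium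
    (n : ℕ) (hn : 1 ≤ n)
    (A : Matrix (Fin n) (Fin n) ℝ)
    (hA : ∀ i j, 0 ≤ A i j)
    (hirr : ∀ i j, ∃ m : ℕ, 1 ≤ m ∧ 0 < (A ^ m) i j)
    (β δ : ℝ) (hβ : 0 < β) (hδ : 0 < δ)
    (hthr : ENNReal.ofReal δ
      < ENNReal.ofReal β * spectralRadius ℂ (A.map Complex.ofReal)) :
    ∃! xstar : Fin n → ℝ,
      (∀ i, xstar i ∈ Set.Ioo (0 : ℝ) 1) ∧
      ∀ i, δ * xstar i = (1 - xstar i) * β * ∑ j, A j i * xstar j :=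
  SIS_endemic_equilibrium_general n A hA hirr β δ hβ hδ hthr
end
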